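/- Let f be a non-decreasing concave function on (0,∞) with lim_{x→∞} f(x)/x = 0, and f̌(t) = inf_{x>0}(x·t − f(x)). Then for every positive definite n×n matrix B, Tr f(B) = inf over positive definite A ∈ ℙ_n of (Tr(AB) − Tr f̌(A)). -/

import Mathlib

open Set Filter
open scoped ComplexOrder

/-- The concave conjugate restricted to `(0, ∞)`. -/
noncomputable def conjInf (f : ℝ → ℝ) (t : ℝ) : ℝ :=
  sInf ((fun x => x * t - f x) '' Ioi (0 : ℝ))




lemma conjInf_bddBelow (f : ℝ → ℝ) (hmono : MonotoneOn f (Ioi (0 : ℝ)))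
    (hlim : Tendsto (fun x => f x / x) atTop (nhds 0)) {t : ℝ} (ht : 0 < t) :
    BddBelow ((fun x => x * t - f x) '' Ioi (0 : ℝ)) := by
  have h1 : ∀ᶠ x in atTop, f x / x < t / 2 := hlim.eventually_lt_const (half_pos ht)
  obtain ⟨M0, hM0⟩ := eventually_atTop.mp h1
  set M := max M0 1 with hM
  have hMpos : (0 : ℝ) < M := lt_of_lt_of_le one_pos (le_max_right _ _)
  refine ⟨min 0 (-(f M)), ?_⟩
  rintro y ⟨x, hx, rfl⟩
  simp only [mem_Ioi] at hx
  rcases le_or_gt x M with hxM | hMx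
  · have hfx : f x ≤ f M := hmono hx hMpos hxM
    have hxt : 0 < x * t := mul_pos hx ht
    have := min_le_right (0 : ℝ) (-(f M))
    simp only
    linarith
  · have h2 : f x / x < t / 2 := hM0 x (le_trans (le_max_left _ _) hMx.le)
    have hx0 : 0 < x := hMpos.trans hMx
    have h3 : f x < t / 2 * x := (div_lt_iff₀ hx0).mp h2
    have := min_le_left (0 : ℝ) (-(f M))
    have h4 : 0 < t / 2 * x := mul_pos (half_pos ht) hx0
    simp only
    nlinarith

lemma conjInf_le (f : ℝ → ℝ) (hmono : MonotoneOn f (Ioi (0 : ℝ)))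
    (hlim : Tendsto (fun x => f x / x) atTop (nhds 0)) {t x : ℝ} (ht : 0 < t) (hx : 0 < x) :
    conjInf f t ≤ x * t - f x :=
  csInf_le (conjInf_bddBelow f hmono hlim ht) ⟨x, hx, rfl⟩

lemma exists_approx (f : ℝ → ℝ) (hmono : MonotoneOn f (Ioi (0 : ℝ)))
    (hconc : ConcaveOn ℝ (Ioi (0 : ℝ)) f) {lam ε : ℝ} (hlam : 0 < lam) (hε : 0 < ε) :
    ∃ t, 0 < t ∧ ∀ x, 0 < x → f x ≤ f lam + t * (x - lam) + ε := by
  have hcont : ContinuousOn f (Ioi 0) := hconc.continuousOn isOpen_Ioi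
  have hat : ContinuousAt f lam := hcont.continuousAt (Ioi_mem_nhds hlam)
  obtain ⟨δ, hδpos, hδ⟩ := Metric.continuousAt_iff.mp hat (ε / 2) (half_pos hε)
  set h := min (δ / 2) (lam / 2) with hhdef
  have hhpos : 0 < h := lt_min (half_pos hδpos) (half_pos hlam)
  have hhlam : 0 < lam - h := by
    have := min_le_right (δ / 2) (lam / 2); linarith
  have hclose : f lam - f (lam - h) ≤ ε / 2 := by
    have hd : dist (lam - h) lam < δ := by
      rw [Real.dist_eq]
      have := min_le_left (δ / 2) (lam / 2)
      rw [abs_of_nonpos (by linarith)]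
      linarith
    have := hδ hd
    rw [Real.dist_eq] at this
    have := abs_le.mp this.le
    linarith [this.1]
  set t0 := (f lam - f (lam - h)) / h with ht0def
  have hfle : f (lam - h) ≤ f lam := hmono (mem_Ioi.mpr hhlam) (mem_Ioi.mpr hlam) (by linarith)
  have ht0 : 0 ≤ t0 := div_nonneg (by linarith) hhpos.le
  have ht0h : t0 * h = f lam - f (lam - h) := div_mul_cancel₀ _ hhpos.ne'
  have key : ∀ x, 0 < x → f x ≤ f lam + t0 * (x - lam) + ε / 2 := by
    intro x hx
    rcases lt_trichotomy x lam with hlt | rfl | hgt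
    · rcases le_or_gt x (lam - h) with hle | hgt2
      · rcases eq_or_lt_of_le hle with rfl | hlt2
        · have : t0 * (lam - h - lam) = -(f lam - f (lam - h)) := by
            rw [show lam - h - lam = -h by ring, mul_neg, ht0h]
          linarith
        · have hs := hconc.slope_anti_adjacent (mem_Ioi.mpr hx) (mem_Ioi.mpr hlam) hlt2
            (show lam - h < lam by linarith)
          rw [sub_sub_cancel] at hs
          -- hs : (f lam - f (lam - h)) / h ≤ (f (lam - h) - f x) / (lam - h - x)
          have hd : 0 < lam - h - x := by linarith
          have h5 : t0 * (lam - h - x) ≤ f (lam - h) - f x := by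
            rw [ht0def]
            calc (f lam - f (lam - h)) / h * (lam - h - x)
                ≤ (f (lam - h) - f x) / (lam - h - x) * (lam - h - x) := by
                  apply mul_le_mul_of_nonneg_right hs hd.le
              _ = f (lam - h) - f x := div_mul_cancel₀ _ hd.ne'
          nlinarith
      · have hfx : f x ≤ f lam := hmono (mem_Ioi.mpr hx) (mem_Ioi.mpr hlam) hlt.le
        nlinarith [mul_nonneg ht0 (show (0:ℝ) ≤ x - lam + h by linarith)]
    · simp only [sub_self, mul_zero]
      linarith
    · have hs := hconc.slope_anti_adjacent (mem_Ioi.mpr hhlam) (mem_Ioi.mpr hx)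
        (show lam - h < lam by linarith) hgt
      rw [sub_sub_cancel] at hs
      have hd : 0 < x - lam := by linarith
      have h5 : f x - f lam ≤ t0 * (x - lam) := by
        rw [ht0def]
        calc f x - f lam = (f x - f lam) / (x - lam) * (x - lam) := (div_mul_cancel₀ _ hd.ne').symm
          _ ≤ (f lam - f (lam - h)) / h * (x - lam) := mul_le_mul_of_nonneg_right hs hd.le
      linarith
  refine ⟨t0 + ε / (2 * lam), by positivity, fun x hx => ?_⟩
  have hk := key x hx
  have hexp : (t0 + ε / (2 * lam)) * (x - lam) = t0 * (x - lam) + ε / (2 * lam) * (x - lam) := by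
    ring
  have h2 : -(ε / 2) ≤ ε / (2 * lam) * (x - lam) := by
    have hc : 0 < ε / (2 * lam) := by positivity
    have : ε / (2 * lam) * (x - lam) + ε / 2 = ε / (2 * lam) * x := by
      field_simp
      ring
    nlinarith [mul_nonneg hc.le hx.le]
  linarith

lemma approx_elem (f : ℝ → ℝ) (hmono : MonotoneOn f (Ioi (0 : ℝ)))
    (hconc : ConcaveOn ℝ (Ioi (0 : ℝ)) f) {lam ε : ℝ} (hlam : 0 < lam) (hε : 0 < ε) :
    ∃ t, 0 < t ∧ lam * t - conjInf f t ≤ f lam + ε := by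
  obtain ⟨t, ht, hkey⟩ := exists_approx f hmono hconc hlam hε
  refine ⟨t, ht, ?_⟩
  have hlow : lam * t - f lam - ε ≤ conjInf f t := by
    apply le_csInf (Set.Nonempty.image _ nonempty_Ioi)
    rintro y ⟨x, hx, rfl⟩
    simp only [mem_Ioi] at hx
    have h1 := hkey x hx
    have h2 : t * (x - lam) = x * t - lam * t := by ring
    simp only
    linarith
  linarith

section MatrixAux
open Matrix
variable {n : Type*} [Fintype n] [DecidableEq n]



lemma contOn_fin (g : ℝ → ℝ) (s : Set ℝ) (hs : s.Finite) : ContinuousOn g s :=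
  hs.continuousOn _

lemma trace_cfc_re (g : ℝ → ℝ) (M : Matrix n n ℂ) (hM : M.IsHermitian) :
    ((cfc g M).trace).re = ∑ i, g (hM.eigenvalues i) := by
  rw [hM.cfc_eq, Matrix.IsHermitian.cfc, Unitary.conjStarAlgAut_apply, Matrix.trace_mul_cycle,
    Unitary.coe_star_mul_self, one_mul, Matrix.trace_diagonal]
  simp [Complex.ofReal_re]

lemma unitary_row_sum {W : Matrix n n ℂ} (hW : W ∈ Matrix.unitaryGroup n ℂ) (j : n) :
    ∑ i, Complex.normSq (W j i) = 1 := by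
  have h := Unitary.mul_star_self_of_mem hW
  have h2 := congrArg (fun M => (M j j).re) h
  simp only [Matrix.mul_apply, Matrix.star_eq_conjTranspose, Matrix.conjTranspose_apply,
    Matrix.one_apply_eq, Complex.mul_conj, Complex.one_re] at h2
  simpa [Complex.normSq_apply] using h2

lemma unitary_col_sum {W : Matrix n n ℂ} (hW : W ∈ Matrix.unitaryGroup n ℂ) (i : n) :
    ∑ j, Complex.normSq (W j i) = 1 := by
  have h := Unitary.star_mul_self_of_mem hW
  have h2 := congrArg (fun M => (M i i).re) h
  simp only [Matrix.mul_apply, Matrix.star_eq_conjTranspose, Matrix.conjTranspose_apply,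
    Matrix.one_apply_eq, Complex.one_re] at h2
  have h3 : ∀ j, (starRingEnd ℂ) (W j i) * W j i = (Complex.normSq (W j i) : ℂ) := by
    intro j; rw [mul_comm, Complex.mul_conj]
  have h4 : ∀ j : n, star (W j i) * W j i = (Complex.normSq (W j i) : ℂ) := by
    intro j; rw [show (star (W j i)) = (starRingEnd ℂ) (W j i) from rfl, mul_comm,
      Complex.mul_conj]
  rw [← h2]
  simp only [h4]
  rw [← Complex.ofReal_sum]
  simp

lemma posDef_cfc (g : ℝ → ℝ) (M : Matrix n n ℂ) (hM : M.IsHermitian)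
    (hg : ∀ i, 0 < g (hM.eigenvalues i)) : (cfc g M).PosDef := by
  rw [hM.cfc_eq, Matrix.IsHermitian.cfc, Unitary.conjStarAlgAut_apply]
  set U : Matrix n n ℂ := (Matrix.IsHermitian.eigenvectorUnitary hM : Matrix n n ℂ) with hU
  have hUmem : U ∈ Matrix.unitaryGroup n ℂ := SetLike.coe_mem _
  set D : Matrix n n ℂ := Matrix.diagonal (RCLike.ofReal ∘ g ∘ hM.eigenvalues) with hD
  have hDpd : D.PosDef := by
    rw [hD]
    refine Matrix.PosDef.diagonal fun i => ?_
    simpa using hg i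
  refine Matrix.PosDef.of_dotProduct_mulVec_pos ?_ ?_
  · unfold Matrix.IsHermitian
    rw [← Matrix.star_eq_conjTranspose]
    have hDs : star D = D := by rw [Matrix.star_eq_conjTranspose]; exact hDpd.1
    simp [Matrix.star_mul, star_star, hDs, mul_assoc]
  · intro x hx
    have hxne : star U *ᵥ x ≠ 0 := by
      intro hcon
      apply hx
      have := congrArg (fun v => U *ᵥ v) hcon
      simpa [Matrix.mulVec_mulVec, Unitary.mul_star_self_of_mem hUmem] using this
    have hpos := hDpd.dotProduct_mulVec_pos hxne
    have heq : star x ⬝ᵥ ((U * D * star U) *ᵥ x)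
        = star (star U *ᵥ x) ⬝ᵥ (D *ᵥ (star U *ᵥ x)) := by
      rw [Matrix.star_mulVec, ← Matrix.mulVec_mulVec, ← Matrix.mulVec_mulVec,
        Matrix.dotProduct_mulVec, Matrix.star_eq_conjTranspose, Matrix.conjTranspose_conjTranspose]
    rw [heq]; exact hpos

lemma trace_conj_re (t l : n → ℝ) (W : Matrix n n ℂ) :
    ((Matrix.diagonal (Complex.ofReal ∘ t) * W * Matrix.diagonal (Complex.ofReal ∘ l)
        * star W).trace).re
      = ∑ j, ∑ i, t j * l i * Complex.normSq (W j i) := by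
  rw [Matrix.trace]
  rw [Complex.re_sum]
  refine Finset.sum_congr rfl fun j _ => ?_
  rw [Matrix.diag_apply, Matrix.mul_apply, Complex.re_sum]
  refine Finset.sum_congr rfl fun i _ => ?_
  simp only [Matrix.diagonal_mul, Matrix.mul_diagonal, Function.comp_apply,
    Matrix.star_eq_conjTranspose, Matrix.conjTranspose_apply]
  have h1 : (t j : ℂ) * W j i * (l i : ℂ) * star (W j i)
      = (t j : ℂ) * (l i : ℂ) * (W j i * star (W j i)) := by ring
  rw [h1, Complex.star_def, Complex.mul_conj, ← Complex.ofReal_mul, ← Complex.ofReal_mul,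
    Complex.ofReal_re, mul_assoc]

lemma trace_mul_eq (A B : Matrix n n ℂ) (hA : A.IsHermitian) (hB : B.IsHermitian) :
    ((A * B).trace).re = ∑ j, ∑ i, hA.eigenvalues j * hB.eigenvalues i
      * Complex.normSq ((star (hA.eigenvectorUnitary : Matrix n n ℂ)
          * (hB.eigenvectorUnitary : Matrix n n ℂ)) j i) := by
  set V : Matrix n n ℂ := (hA.eigenvectorUnitary : Matrix n n ℂ)
  set U : Matrix n n ℂ := (hB.eigenvectorUnitary : Matrix n n ℂ)
  set W : Matrix n n ℂ := star V * U with hW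
  have hV : V ∈ Matrix.unitaryGroup n ℂ := SetLike.coe_mem _
  have step1 : A * B = V * (Matrix.diagonal (Complex.ofReal ∘ hA.eigenvalues) * W
      * Matrix.diagonal (Complex.ofReal ∘ hB.eigenvalues) * star W) * star V := by
    conv_lhs => rw [hA.spectral_theorem, hB.spectral_theorem]
    rw [hW]
    simp only [Unitary.conjStarAlgAut_apply, StarMul.star_mul, star_star, mul_assoc]
    rw [Unitary.mul_star_self_of_mem hV, mul_one]
    rfl
  have key : (A * B).trace = (Matrix.diagonal (Complex.ofReal ∘ hA.eigenvalues) * W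
      * Matrix.diagonal (Complex.ofReal ∘ hB.eigenvalues) * star W).trace := by
    rw [step1, Matrix.trace_mul_cycle, Unitary.star_mul_self_of_mem hV, one_mul]
  rw [key, trace_conj_re]

end MatrixAux

theorem stmt4 {n : Type*} [Fintype n] [DecidableEq n] (f : ℝ → ℝ)
    (hmono : MonotoneOn f (Ioi (0 : ℝ)))
    (hconc : ConcaveOn ℝ (Ioi (0 : ℝ)) f)
    (hlim : Tendsto (fun x => f x / x) atTop (nhds 0))
    (B : Matrix n n ℂ) (hB : B.PosDef) :
    ((cfc f B).trace).re =
      sInf { y : ℝ | ∃ A : Matrix n n ℂ, A.PosDef ∧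
        y = ((A * B).trace).re - ((cfc (conjInf f) A).trace).re } := by
  classical
  have hBh : B.IsHermitian := hB.1
  set L : ℝ := ∑ i, f (hBh.eigenvalues i) with hL
  have hLHS : ((cfc f B).trace).re = L := trace_cfc_re f B hBh
  set S := { y : ℝ | ∃ A : Matrix n n ℂ, A.PosDef ∧
        y = ((A * B).trace).re - ((cfc (conjInf f) A).trace).re } with hS
  have hlb : ∀ y ∈ S, L ≤ y := by
    rintro y ⟨A, hApd, rfl⟩
    have hAh : A.IsHermitian := hApd.1
    set W : Matrix n n ℂ := star (hAh.eigenvectorUnitary : Matrix n n ℂ)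
      * (hBh.eigenvectorUnitary : Matrix n n ℂ) with hW
    have hWmem : W ∈ Matrix.unitaryGroup n ℂ :=
      mul_mem (Unitary.star_mem (SetLike.coe_mem _)) (SetLike.coe_mem _)
    have htr := trace_mul_eq A B hAh hBh
    have hcheck : ((cfc (conjInf f) A).trace).re = ∑ j, conjInf f (hAh.eigenvalues j) :=
      trace_cfc_re _ A hAh
    rw [htr, hcheck, ← hW]
    have hL2 : L = ∑ j, ∑ i, Complex.normSq (W j i) * f (hBh.eigenvalues i) := by
      rw [hL, Finset.sum_comm]
      refine Finset.sum_congr rfl fun i _ => ?_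
      rw [← Finset.sum_mul, unitary_col_sum hWmem, one_mul]
    have hsplit : ∑ j, conjInf f (hAh.eigenvalues j)
        = ∑ j, ∑ i, Complex.normSq (W j i) * conjInf f (hAh.eigenvalues j) := by
      refine Finset.sum_congr rfl fun j _ => ?_
      rw [← Finset.sum_mul, unitary_row_sum hWmem, one_mul]
    rw [hL2, hsplit, ← Finset.sum_sub_distrib]
    refine Finset.sum_le_sum fun j _ => ?_
    rw [← Finset.sum_sub_distrib]
    refine Finset.sum_le_sum fun i _ => ?_
    have h1 : conjInf f (hAh.eigenvalues j)
        ≤ hBh.eigenvalues i * hAh.eigenvalues j - f (hBh.eigenvalues i) :=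
      conjInf_le f hmono hlim (hApd.eigenvalues_pos j) (hB.eigenvalues_pos i)
    have h2 : f (hBh.eigenvalues i)
        ≤ hAh.eigenvalues j * hBh.eigenvalues i - conjInf f (hAh.eigenvalues j) := by
      linarith [h1, mul_comm (hBh.eigenvalues i) (hAh.eigenvalues j)]
    have h3 := mul_le_mul_of_nonneg_left h2 (Complex.normSq_nonneg (W j i))
    nlinarith [h3]
  have hne : S.Nonempty := ⟨_, 1, Matrix.PosDef.one, rfl⟩
  have hbdd : BddBelow S := ⟨L, hlb⟩
  rw [hLHS]
  refine le_antisymm (le_csInf hne hlb) ?_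
  refine le_of_forall_pos_le_add fun ε hε => ?_
  set m : ℝ := (Fintype.card n : ℝ) + 1 with hm
  have hmpos : 0 < m := by positivity
  set ε' : ℝ := ε / m with hε'def
  have hε' : 0 < ε' := div_pos hε hmpos
  have hch : ∀ lam : ℝ, 0 < lam → ∃ t, 0 < t ∧ lam * t - conjInf f t ≤ f lam + ε' :=
    fun lam hl => approx_elem f hmono hconc hl hε'
  set T : ℝ → ℝ := fun lam => if h : 0 < lam then (hch lam h).choose else 1 with hT
  have hTpos : ∀ lam, 0 < T lam := by
    intro lam
    by_cases h : 0 < lam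
    · simp only [hT, dif_pos h]
      exact (hch lam h).choose_spec.1
    · simp only [hT, dif_neg h]
      exact one_pos
  have hTspec : ∀ lam, 0 < lam → lam * T lam - conjInf f (T lam) ≤ f lam + ε' := by
    intro lam h
    simp only [hT, dif_pos h]
    exact (hch lam h).choose_spec.2
  set A : Matrix n n ℂ := cfc T B with hAdef
  have hBsa : IsSelfAdjoint B := hBh
  have hApd : A.PosDef := posDef_cfc T B hBh (fun i => hTpos _)
  have hAB : A * B = cfc (fun x => T x * x) B := by
    rw [cfc_mul (fun x => T x) (fun x => x) B
      ((Matrix.finite_real_spectrum (A := B)).continuousOn _) ((Matrix.finite_real_spectrum (A := B)).continuousOn _),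
      cfc_id' ℝ B]
  have h1 : ((A * B).trace).re = ∑ i, T (hBh.eigenvalues i) * (hBh.eigenvalues i) := by
    rw [hAB]; exact trace_cfc_re _ B hBh
  have h2 : cfc (conjInf f) A = cfc (conjInf f ∘ T) B := by
    rw [hAdef, ← cfc_comp (conjInf f) T B hBsa
      (((Matrix.finite_real_spectrum (A := B)).image T).continuousOn _) ((Matrix.finite_real_spectrum (A := B)).continuousOn _)]
  have h3 : ((cfc (conjInf f) A).trace).re = ∑ i, conjInf f (T (hBh.eigenvalues i)) := by
    rw [h2]; exact trace_cfc_re _ B hBh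
  have hy : (((A * B).trace).re - ((cfc (conjInf f) A).trace).re) ∈ S := ⟨A, hApd, rfl⟩
  refine csInf_le_of_le hbdd hy ?_
  rw [h1, h3, ← Finset.sum_sub_distrib]
  have hstep : ∑ i, (T (hBh.eigenvalues i) * hBh.eigenvalues i - conjInf f (T (hBh.eigenvalues i)))
      ≤ ∑ i : n, (f (hBh.eigenvalues i) + ε') := by
    refine Finset.sum_le_sum fun i _ => ?_
    have := hTspec (hBh.eigenvalues i) (hB.eigenvalues_pos i)
    linarith [mul_comm (T (hBh.eigenvalues i)) (hBh.eigenvalues i)]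
  refine hstep.trans ?_
  rw [Finset.sum_add_distrib, Finset.sum_const, nsmul_eq_mul, Finset.card_univ]
  have hcard : (Fintype.card n : ℝ) ≤ m := by rw [hm]; linarith
  have : (Fintype.card n : ℝ) * ε' ≤ ε := by
    rw [hε'def]
    rw [div_eq_mul_inv, ← mul_assoc]
    calc (Fintype.card n : ℝ) * ε * m⁻¹ ≤ m * ε * m⁻¹ := by
          have := mul_le_mul_of_nonneg_right hcard hε.le
          exact mul_le_mul_of_nonneg_right this (inv_nonneg.mpr hmpos.le)
      _ = ε := by field_simp
  linarith
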